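/- Let 0 < r < 1 and 1 ≤ p < ∞. Neither of the inclusions t_p^r ⊆ ℓ_∞ nor ℓ_∞ ⊆ t_p^r holds: there exists a bounded sequence x with T(r)x ∉ ℓ_p, and there exists an unbounded sequence x with T(r)x ∈ ℓ_p. -/

import Mathlib

noncomputable def taylorEntry (r : ℝ) (n k : ℕ) : ℝ :=
  if n ≤ k then (k.choose n : ℝ) * (1 - r) ^ (n + 1) * r ^ (k - n) else 0

noncomputable def taylorTransform (r : ℝ) (x : ℕ → ℝ) (n : ℕ) : ℝ :=
  ∑' k, taylorEntry r n k * x k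

/-- The Taylor sequence space `t_p^r`. -/
def TaylorLp (r p : ℝ) : Set (ℕ → ℝ) :=
  {x | (∀ n, Summable fun k => |taylorEntry r n k * x k|) ∧
    Summable fun n => |taylorTransform r x n| ^ p}

/-! The Taylor transform of a geometric sequence `s ^ k` is the geometric sequence
`(1 - r) / (1 - r s) * ((1 - r) s / (1 - r s)) ^ n`. For `s = 1` this is constantly `1`, which is
bounded but not in `ℓ_p`. For `s = -t` with `t > 1` the sequence is unbounded, while the ratio has
modulus `(1 - r) t / (1 + r t)`, which stays below `1` when `t` is close enough to `1`;
`t = 1 + r (1 - r)` will do. -/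

section

variable {r s : ℝ}

theorem taylorEntry_of_lt {n k : ℕ} (h : k < n) : taylorEntry r n k = 0 :=
  if_neg h.not_ge

theorem taylorEntry_add_self (n j : ℕ) :
    taylorEntry r n (j + n) = (j + n).choose n * (1 - r) ^ (n + 1) * r ^ j := by
  rw [taylorEntry, if_pos (Nat.le_add_left n j), Nat.add_sub_cancel]

theorem hasSum_taylorEntry_mul_pow (hs : |r * s| < 1) (n : ℕ) :
    HasSum (fun k => taylorEntry r n k * s ^ k)
      ((1 - r) / (1 - r * s) * ((1 - r) * s / (1 - r * s)) ^ n) := by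
  have hden : 1 - r * s ≠ 0 := by linarith [le_abs_self (r * s)]
  rw [← hasSum_nat_add_iff' n, Finset.sum_eq_zero fun k hk => by
    rw [taylorEntry_of_lt (Finset.mem_range.1 hk), zero_mul], sub_zero]
  have hval : (1 - r) / (1 - r * s) * ((1 - r) * s / (1 - r * s)) ^ n
      = (1 - r) ^ (n + 1) * s ^ n * (1 / (1 - r * s) ^ (n + 1)) := by
    rw [div_pow, mul_pow, pow_succ', pow_succ']
    field_simp
  have hterm : (fun j => taylorEntry r n (j + n) * s ^ (j + n))
      = fun j => (1 - r) ^ (n + 1) * s ^ n * ((j + n).choose n * (r * s) ^ j) := by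
    funext j
    rw [taylorEntry_add_self]
    ring
  rw [hval, hterm]
  have hnorm : ‖r * s‖ < 1 := by rwa [Real.norm_eq_abs]
  exact (hasSum_choose_mul_geometric_of_norm_lt_one n hnorm).mul_left _

theorem summable_abs_taylorEntry_mul_pow (hs : |r * s| < 1) (n : ℕ) :
    Summable fun k => |taylorEntry r n k * s ^ k| := by
  rw [← summable_nat_add_iff n]
  have hnorm : ‖|r * s|‖ < 1 := by rwa [Real.norm_eq_abs, abs_abs]
  refine ((summable_choose_mul_geometric_of_norm_lt_one n hnorm).mul_left
    (|1 - r| ^ (n + 1) * |s| ^ n)).congr fun j => ?_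
  rw [taylorEntry_add_self]
  simp only [abs_mul, abs_pow, Nat.abs_cast, mul_pow, pow_add]
  ring

theorem taylorTransform_pow (hs : |r * s| < 1) (n : ℕ) :
    taylorTransform r (fun k => s ^ k) n
      = (1 - r) / (1 - r * s) * ((1 - r) * s / (1 - r * s)) ^ n :=
  (hasSum_taylorEntry_mul_pow hs n).tsum_eq

theorem taylorTransform_one (hr : |r| < 1) (n : ℕ) : taylorTransform r (fun _ => 1) n = 1 := by
  have h1r : 1 - r ≠ 0 := by linarith [le_abs_self r]
  have h := taylorTransform_pow (s := 1) (by rwa [mul_one]) n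
  simp only [one_pow, mul_one, div_self h1r] at h
  exact h

theorem summable_abs_mul_pow_rpow {a q p : ℝ} (hq : |q| < 1) (hp : 0 < p) :
    Summable fun n : ℕ => |a * q ^ n| ^ p := by
  have h (n : ℕ) : |a * q ^ n| ^ p = |a| ^ p * (|q| ^ p) ^ n := by
    rw [abs_mul, abs_pow, Real.mul_rpow (abs_nonneg a) (by positivity),
      Real.rpow_pow_comm (abs_nonneg q)]
  simpa only [h] using (summable_geometric_of_lt_one (by positivity)
    (Real.rpow_lt_one (abs_nonneg q) hq hp)).mul_left (|a| ^ p)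

theorem pow_mem_taylorLp {p : ℝ} (hs : |r * s| < 1) (hq : |(1 - r) * s| < |1 - r * s|)
    (hp : 0 < p) : (fun k => s ^ k) ∈ TaylorLp r p := by
  refine ⟨summable_abs_taylorEntry_mul_pow hs, ?_⟩
  simp_rw [taylorTransform_pow hs]
  exact summable_abs_mul_pow_rpow (by rwa [abs_div, div_lt_one (hq.trans_le' (abs_nonneg _))]) hp

end

/-- For `0 < r < 1` and `1 ≤ p < ∞`, neither of `t_p^r ⊆ ℓ_∞` and `ℓ_∞ ⊆ t_p^r` holds :
there is a bounded sequence whose Taylor transform (which is well defined for bounded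
sequences) is not in `ℓ_p`, and there is an unbounded sequence belonging to `t_p^r`. -/
theorem taylorLp_linf_incomparable (r p : ℝ) (hr0 : 0 < r) (hr1 : r < 1) (hp : 1 ≤ p) :
    (∃ x : ℕ → ℝ, (∃ C : ℝ, ∀ k, |x k| ≤ C) ∧
        (∀ n, Summable fun k => |taylorEntry r n k * x k|) ∧
        ¬ Summable fun n => |taylorTransform r x n| ^ p) ∧
      (∃ x : ℕ → ℝ, (¬ ∃ C : ℝ, ∀ k, |x k| ≤ C) ∧ x ∈ TaylorLp r p) := by
  have hr : |r| < 1 := abs_lt.2 ⟨by linarith, hr1⟩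
  constructor
  · refine ⟨fun _ => 1, ⟨1, fun _ => by simp⟩,
      fun n => by simpa using summable_abs_taylorEntry_mul_pow (s := 1) (by rwa [mul_one]) n, ?_⟩
    simp [taylorTransform_one hr, summable_const_iff]
  · obtain ⟨t, ht1, hrt, hq⟩ : ∃ t : ℝ, 1 < t ∧ r * t < 1 ∧ (1 - r) * t < 1 + r * t :=
      ⟨1 + r * (1 - r), by nlinarith,
        by nlinarith [mul_pos (mul_pos (sub_pos.2 hr1) (sub_pos.2 hr1)) (by linarith : 0 < 1 + r)],
        by nlinarith [mul_pos (mul_pos hr0 hr0) (sub_pos.2 hr1)]⟩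
    have ht0 : 0 < t := by linarith
    refine ⟨fun k => (-t) ^ k, ?_, pow_mem_taylorLp ?_ ?_ (by linarith)⟩
    · rintro ⟨C, hC⟩
      obtain ⟨k, hk⟩ := pow_unbounded_of_one_lt C ht1
      have := hC k
      rw [abs_pow, abs_neg, abs_of_pos ht0] at this
      linarith
    · rwa [mul_neg, abs_neg, abs_of_pos (by positivity)]
    · simp only [mul_neg, abs_neg, sub_neg_eq_add]
      rwa [abs_of_pos (by nlinarith), abs_of_pos (by positivity)]
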